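/- arXiv:1403.3828 — 7 statements merged into one kernel-verified Lean document; each statement's English description precedes it below -/
import Mathlib

section
/- For the path graph (1D linear cluster) L_n on n vertices, |⟨G^∅|L_{2n}⟩|² = |⟨G^∅|L_{2n+1}⟩|² = 1/2^{2n}. -/
open scoped BigOperators

/-- The graph state amplitude function for edge set `E` on `n` qubits:
`|G⟩ = ∏ CZ |+⟩^⊗n`, whose amplitude on a computational basis state `x` is
`2^(-n/2)` times `(-1)` for every edge both of whose endpoints are in state `1`. -/
noncomputable def gs (n : ℕ) (E : Finset (Sym2 (Fin n))) : (Fin n → Fin 2) → ℂ :=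
  fun x => ((Real.sqrt 2)⁻¹ : ℝ) ^ n *
    ∏ e ∈ E, (if ∀ i ∈ e, x i = 1 then (-1 : ℂ) else 1)

/-- Inner product `⟨v|w⟩` on the `n`-qubit state space. -/
noncomputable def ip {n : ℕ} (v w : (Fin n → Fin 2) → ℂ) : ℂ :=
  ∑ x, (starRingEnd ℂ) (v x) * w x

/-- The edge set of the complete graph on `n` labeled vertices. -/
def completeEdges (n : ℕ) : Finset (Sym2 (Fin n)) :=
  Finset.univ.filter fun e => ¬ e.IsDiag

/-- The edge set of the path graph (1D linear cluster) on `n` vertices. -/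
def pathEdges (n : ℕ) : Finset (Sym2 (Fin n)) :=
  Finset.univ.filter fun e => ∃ a b : Fin n, e = s(a, b) ∧ (a : ℕ) + 1 = (b : ℕ)

/- ### Auxiliary development -/

noncomputable def sg (c d : Fin 2) : ℂ := if c = 1 ∧ d = 1 then -1 else 1

noncomputable def P (n : ℕ) (x : Fin (n+1) → Fin 2) : ℂ :=
  ∏ i : Fin n, sg (x i.castSucc) (x i.succ)

lemma P_succ (n : ℕ) (x : Fin (n+2) → Fin 2) :
    P (n+1) x = sg (x 0) (x 1) * P n (x ∘ Fin.succ) := by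
  rw [P, Fin.prod_univ_succ, P]
  have h0 : (Fin.castSucc (0 : Fin (n+1))) = (0 : Fin (n+2)) := rfl
  have h1 : (Fin.succ (0 : Fin (n+1))) = (1 : Fin (n+2)) := rfl
  rw [h0, h1]
  congr 1

noncomputable def A (n : ℕ) : ℂ := ∑ y : Fin n → Fin 2, P n (Fin.cons 0 y)
noncomputable def B (n : ℕ) : ℂ := ∑ y : Fin n → Fin 2, P n (Fin.cons 1 y)

lemma sum_cons_decomp (n : ℕ) (f : (Fin (n+1) → Fin 2) → ℂ) :
    ∑ x : Fin (n+1) → Fin 2, f x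
      = ∑ c : Fin 2, ∑ y : Fin n → Fin 2, f (Fin.cons c y) := by
  have := Fintype.sum_equiv (Fin.consEquiv (fun _ : Fin (n+1) => Fin 2))
    (fun p => f (Fin.cons p.1 p.2)) f (fun p => rfl)
  rw [← this, Fintype.sum_prod_type]

lemma sum_P (n : ℕ) : ∑ x : Fin (n+1) → Fin 2, P n x = A n + B n := by
  rw [sum_cons_decomp, Fin.sum_univ_two, A, B]

lemma A_zero : A 0 = 1 := by simp [A, P]
lemma B_zero : B 0 = 1 := by simp [B, P]

lemma A_succ (n : ℕ) : A (n+1) = A n + B n := by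
  rw [A]
  have : ∀ y : Fin (n+1) → Fin 2, P (n+1) (Fin.cons 0 y) = P n y := by
    intro y
    rw [P_succ]
    have h2 : (Fin.cons (0:Fin 2) y) ∘ Fin.succ = y := funext (fun i => by simp [Function.comp])
    rw [h2, Fin.cons_zero]
    simp [sg]
  simp_rw [this]
  rw [sum_cons_decomp n (P n), Fin.sum_univ_two, A, B]

lemma B_succ (n : ℕ) : B (n+1) = A n - B n := by
  rw [B]
  have : ∀ y : Fin (n+1) → Fin 2, P (n+1) (Fin.cons 1 y) = sg 1 (y 0) * P n y := by
    intro y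
    rw [P_succ]
    have h2 : (Fin.cons (1:Fin 2) y) ∘ Fin.succ = y := funext (fun i => by simp [Function.comp])
    have h1' : (Fin.cons (1:Fin 2) y : Fin (n+2) → Fin 2) 1 = y 0 := by
      have : (1 : Fin (n+2)) = Fin.succ 0 := rfl
      rw [this, Fin.cons_succ]
    rw [h2, Fin.cons_zero, h1']
  simp_rw [this]
  rw [sum_cons_decomp n (fun y => sg 1 (y 0) * P n y), Fin.sum_univ_two]
  simp_rw [Fin.cons_zero]
  have s0 : sg 1 0 = 1 := by simp [sg]
  have s1 : sg 1 1 = -1 := by simp [sg]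
  rw [s0, s1]
  simp [A, B, sub_eq_add_neg]

lemma AB_even (m : ℕ) : A (2*m) = 2^m ∧ B (2*m) = 2^m := by
  induction m with
  | zero => simpa using ⟨A_zero, B_zero⟩
  | succ k ih =>
    have h2 : 2*(k+1) = (2*k+1)+1 := by ring
    have hA1 : A (2*k+1) = A (2*k) + B (2*k) := A_succ _
    have hB1 : B (2*k+1) = A (2*k) - B (2*k) := B_succ _
    constructor
    · rw [h2, A_succ, hA1, hB1, ih.1, ih.2]; ring
    · rw [h2, B_succ, hA1, hB1, ih.1, ih.2]; ring

lemma pathEdges_eq (n : ℕ) :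
    pathEdges (n+1) = Finset.image (fun i : Fin n => s(i.castSucc, i.succ)) Finset.univ := by
  ext e
  simp only [pathEdges, Finset.mem_filter, Finset.mem_univ, true_and, Finset.mem_image]
  constructor
  · rintro ⟨a, b, rfl, hab⟩
    have ha : (a : ℕ) < n := by omega
    refine ⟨⟨a, ha⟩, ?_⟩
    have hA : a = (⟨a, ha⟩ : Fin n).castSucc := by ext; simp
    have hB : b = (⟨a, ha⟩ : Fin n).succ := by ext; simp [← hab]
    rw [← hA, ← hB]
  · rintro ⟨i, rfl⟩
    exact ⟨i.castSucc, i.succ, rfl, by simp⟩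

lemma prod_path (n : ℕ) (x : Fin (n+1) → Fin 2) :
    ∏ e ∈ pathEdges (n+1), (if ∀ i ∈ e, x i = 1 then (-1 : ℂ) else 1) = P n x := by
  rw [pathEdges_eq, Finset.prod_image]
  · rw [P]
    apply Finset.prod_congr rfl
    intro i _
    have : (∀ j ∈ s(i.castSucc, i.succ), x j = 1) ↔ (x i.castSucc = 1 ∧ x i.succ = 1) := by
      simp [Sym2.mem_iff]
    rw [sg]
    split_ifs with h1 h2 h2 <;> first | rfl | (exfalso; tauto)
  · intro a _ b _ h
    rw [Sym2.eq_iff] at h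
    rcases h with ⟨h1, _⟩ | ⟨h1, h2⟩
    · exact Fin.castSucc_injective _ h1
    · have e1 : (a : ℕ) = (b : ℕ) + 1 := by
        have := congrArg Fin.val h1; simpa using this
      have e2 : (a : ℕ) + 1 = (b : ℕ) := by
        have := congrArg Fin.val h2; simpa using this
      omega

lemma ip_calc (m : ℕ) :
    ip (gs (m+1) (∅ : Finset (Sym2 (Fin (m+1))))) (gs (m+1) (pathEdges (m+1)))
      = ((2:ℂ))⁻¹ ^ (m+1) * (A m + B m) := by
  rw [ip]
  have hc : ∀ x : Fin (m+1) → Fin 2,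
      gs (m+1) (∅ : Finset (Sym2 (Fin (m+1)))) x = (((Real.sqrt 2)⁻¹ : ℝ) : ℂ) ^ (m+1) := by
    intro x; simp [gs]
  have key : ∀ x : Fin (m+1) → Fin 2,
      (starRingEnd ℂ) (gs (m+1) (∅ : Finset (Sym2 (Fin (m+1)))) x)
          * gs (m+1) (pathEdges (m+1)) x
        = ((2:ℂ))⁻¹ ^ (m+1) * P m x := by
    intro x
    rw [hc, gs, prod_path]
    rw [← Complex.ofReal_pow, Complex.conj_ofReal, Complex.ofReal_pow]
    rw [← mul_assoc, ← mul_pow]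
    congr 2
    have hr : ((Real.sqrt 2)⁻¹ : ℝ) * (Real.sqrt 2)⁻¹ = 2⁻¹ := by
      rw [← mul_inv, Real.mul_self_sqrt (by norm_num : (0:ℝ) ≤ 2)]
    rw [← Complex.ofReal_mul, hr]
    push_cast
    ring
  simp_rw [key]
  rw [← Finset.mul_sum, sum_P]

lemma pow_helper (j l : ℕ) : (2:ℂ)⁻¹ ^ (j + l) * (2:ℂ) ^ l = 2⁻¹ ^ j := by
  rw [pow_add, mul_assoc, inv_pow (2:ℂ) l, inv_mul_cancel₀ (by norm_num : ((2:ℂ) ^ l) ≠ 0), mul_one]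

lemma abs_sq_half_pow (j : ℕ) : ‖((2:ℂ)⁻¹ ^ j)‖ ^ 2 = 1 / 2 ^ (2 * j) := by
  rw [norm_pow, norm_inv, Complex.norm_two, ← pow_mul, inv_pow, one_div,
    show j * 2 = 2 * j from mul_comm j 2]

lemma overlap_even (k : ℕ) :
    ‖ip (gs (2*k+2) (∅ : Finset (Sym2 (Fin (2*k+2)))))
        (gs (2*k+2) (pathEdges (2*k+2)))‖ ^ 2 = 1 / 2 ^ (2*(k+1)) := by
  have hip := ip_calc (2*k+1)
  have hAB : A (2*k+1) + B (2*k+1) = 2 ^ (k+1) := by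
    rw [A_succ, B_succ, (AB_even k).1, (AB_even k).2]; ring
  rw [show (2*k+2) = (2*k+1)+1 from rfl, hip, hAB,
    show (2*k+1)+1 = (k+1)+(k+1) from by ring, pow_helper, abs_sq_half_pow]

lemma overlap_odd (n : ℕ) :
    ‖ip (gs (2*n+1) (∅ : Finset (Sym2 (Fin (2*n+1)))))
        (gs (2*n+1) (pathEdges (2*n+1)))‖ ^ 2 = 1 / 2 ^ (2*n) := by
  have hip := ip_calc (2*n)
  have hAB : A (2*n) + B (2*n) = 2 ^ (n+1) := by
    rw [(AB_even n).1, (AB_even n).2]; ring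
  rw [show (2*n+1) = (2*n)+1 from rfl, hip, hAB,
    show (2*n)+1 = n+(n+1) from by ring, pow_helper, abs_sq_half_pow]

/-- the overlap of a path-graph (1D cluster) state with the empty graph
state satisfies |⟨G^∅|L_{2n}⟩|² = |⟨G^∅|L_{2n+1}⟩|² = 1/2^(2n). -/
theorem path_overlap_empty (n : ℕ) :
    (n ≥ 1 → ‖ip (gs (2 * n) (∅ : Finset (Sym2 (Fin (2 * n)))))
        (gs (2 * n) (pathEdges (2 * n)))‖ ^ 2 = 1 / 2 ^ (2 * n)) ∧
    ‖ip (gs (2 * n + 1) (∅ : Finset (Sym2 (Fin (2 * n + 1)))))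
        (gs (2 * n + 1) (pathEdges (2 * n + 1)))‖ ^ 2 = 1 / 2 ^ (2 * n) := by
  constructor
  · intro hn
    obtain ⟨k, rfl⟩ : ∃ k, n = k + 1 := ⟨n - 1, by omega⟩
    exact overlap_even k
  · exact overlap_odd n
end

section
/- For the cycle graph C_n on n vertices with n odd, the cycle graph state is orthogonal to the empty graph state: ⟨G^∅|C_{2n+1}⟩ = 0, while for n even, |⟨G^∅|C_{2n}⟩|² = 1/2^{2n-2}. -/
open scoped BigOperators

/-- The edge set of the cycle graph on `n` vertices. -/
def cycleEdges (n : ℕ) : Finset (Sym2 (Fin n)) :=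
  Finset.univ.filter fun e => ∃ a b : Fin n, e = s(a, b) ∧ ((a : ℕ) + 1) % n = (b : ℕ)

/-!
Expanding in the computational basis, `⟨G^∅|C_n⟩ = 2⁻ⁿ ∑ₓ ∏ᵢ (-1) ^ (xᵢ xᵢ₊₁)`, and a sum over
closed walks of products of matrix entries is a trace: the overlap is `2⁻ⁿ tr (Tⁿ)` for the
transfer matrix `T = !![1, 1; 1, -1]`. Since `T² = 2` and `tr T = 0`, `tr (Tⁿ)` vanishes for odd
`n` and equals `2 ^ (m + 1)` for `n = 2m`.
-/

theorem Fin.sum_pi_succ {ι M : Type*} [Fintype ι] [AddCommMonoid M] {k : ℕ}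
    (f : (Fin (k + 1) → ι) → M) :
    ∑ x, f x = ∑ a, ∑ y : Fin k → ι, f (Fin.cons a y) := by
  rw [← (Fin.consEquiv fun _ => ι).sum_comp, Fintype.sum_prod_type]
  rfl

namespace Matrix

variable {ι R : Type*} [Fintype ι] [DecidableEq ι] [CommSemiring R]

/-- The walk `a, y 0, …, y (k - 1), b`: its `i`-th step goes from `Fin.cons a y i`
to `Fin.snoc y b i`. -/
theorem pow_succ_apply_eq_sum_walks (M : Matrix ι ι R) (k : ℕ) (a b : ι) :
    (M ^ (k + 1)) a b = ∑ y : Fin k → ι, ∏ i : Fin (k + 1),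
      M (Fin.cons (α := fun _ => ι) a y i) (Fin.snoc (α := fun _ => ι) y b i) := by
  induction k generalizing a with
  | zero => simp [Fin.snoc]
  | succ k ih =>
    rw [pow_succ', mul_apply, Fin.sum_pi_succ]
    refine Finset.sum_congr rfl fun c _ => ?_
    rw [ih, Finset.mul_sum]
    refine Finset.sum_congr rfl fun y _ => ?_
    rw [← Fin.cons_snoc_eq_snoc_cons, Fin.prod_univ_succ (n := k + 1)]
    simp

theorem trace_pow_eq_sum_cycles (M : Matrix ι ι R) (n : ℕ) [NeZero n] :
    trace (M ^ n) = ∑ x : Fin n → ι, ∏ i, M (x i) (x (i + 1)) := by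
  obtain ⟨k, rfl⟩ := Nat.exists_eq_succ_of_ne_zero (NeZero.ne n)
  rw [trace, Fin.sum_pi_succ]
  refine Finset.sum_congr rfl fun a _ => ?_
  simp only [diag_apply, pow_succ_apply_eq_sum_walks, Fin.snoc_eq_cons_rotate, finRotate_apply]

end Matrix

/-- `√2 ⋅ H` for the Hadamard gate `H`; its entries are the CZ phases `(-1) ^ (u v)`. -/
def czPhase (R : Type*) [Ring R] : Matrix (Fin 2) (Fin 2) R := !![1, 1; 1, -1]

section czPhase

variable {R : Type*} [CommRing R]

theorem czPhase_apply (u v : Fin 2) : czPhase R u v = if u = 1 ∧ v = 1 then -1 else 1 := by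
  fin_cases u <;> fin_cases v <;> simp [czPhase]

theorem czPhase_mul_self : czPhase R * czPhase R = (2 : R) • 1 := by
  ext i j
  fin_cases i <;> fin_cases j <;> simp [czPhase, Matrix.mul_apply, Fin.sum_univ_two] <;> ring

theorem czPhase_pow_two_mul (m : ℕ) : czPhase R ^ (2 * m) = (2 : R) ^ m • 1 := by
  rw [pow_mul, sq, czPhase_mul_self, smul_pow, one_pow]

theorem trace_czPhase_pow_two_mul_add_one (m : ℕ) : (czPhase R ^ (2 * m + 1)).trace = 0 := by
  rw [pow_succ, czPhase_pow_two_mul, smul_one_mul, Matrix.trace_smul]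
  simp [czPhase, Matrix.trace_fin_two]

theorem trace_czPhase_pow_two_mul (m : ℕ) : (czPhase R ^ (2 * m)).trace = 2 ^ (m + 1) := by
  rw [czPhase_pow_two_mul, Matrix.trace_smul, Matrix.trace_one, Fintype.card_fin, pow_succ,
    smul_eq_mul, Nat.cast_ofNat]

end czPhase

theorem Fin.val_add_one_eq_mod {n : ℕ} [NeZero n] (a : Fin n) :
    ((a + 1 : Fin n) : ℕ) = ((a : ℕ) + 1) % n := by
  rw [Fin.val_add, Fin.val_one', Nat.add_mod_mod]

theorem cycleEdges_eq_image (n : ℕ) [NeZero n] :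
    cycleEdges n = Finset.univ.image fun a : Fin n => s(a, a + 1) := by
  ext e
  simp only [cycleEdges, Finset.mem_filter, Finset.mem_image, Finset.mem_univ, true_and,
    ← Fin.val_add_one_eq_mod, Fin.val_inj]
  constructor
  · rintro ⟨a, _, rfl, rfl⟩
    exact ⟨a, rfl⟩
  · rintro ⟨a, rfl⟩
    exact ⟨a, _, rfl, rfl⟩

theorem injective_sym2_mk_add_one {n : ℕ} [NeZero n] (hn : 3 ≤ n) :
    Function.Injective fun a : Fin n => s(a, a + 1) := by
  intro a c h
  rcases Sym2.eq_iff.mp h with ⟨rfl, -⟩ | ⟨rfl, hc⟩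
  · rfl
  · have hone : ((1 : Fin n) : ℕ) = 1 := by rw [Fin.val_one', Nat.mod_eq_of_lt (by omega)]
    have htwo : ((1 + 1 : Fin n) : ℕ) = 0 := by
      rw [add_assoc, add_eq_left] at hc
      rw [hc, Fin.val_zero]
    rw [Fin.val_add_one_eq_mod, hone, Nat.mod_eq_of_lt (by omega)] at htwo
    omega

theorem ip_gs_empty {n : ℕ} (E : Finset (Sym2 (Fin n))) :
    ip (gs n ∅) (gs n E) =
      2⁻¹ ^ n * ∑ x : Fin n → Fin 2, ∏ e ∈ E, (if ∀ i ∈ e, x i = 1 then (-1 : ℂ) else 1) := by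
  have hnorm : (((Real.sqrt 2)⁻¹ : ℝ) : ℂ) ^ n * (((Real.sqrt 2)⁻¹ : ℝ) : ℂ) ^ n = 2⁻¹ ^ n := by
    rw [← mul_pow, ← Complex.ofReal_mul, ← mul_inv, Real.mul_self_sqrt zero_le_two]
    norm_num
  simp only [ip, gs, Finset.prod_empty, mul_one, map_pow, Complex.conj_ofReal, ← mul_assoc, hnorm,
    Finset.mul_sum]

theorem ip_gs_empty_gs_cycleEdges {n : ℕ} [NeZero n] (hn : 3 ≤ n) :
    ip (gs n ∅) (gs n (cycleEdges n)) = 2⁻¹ ^ n * (czPhase ℂ ^ n).trace := by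
  rw [ip_gs_empty, Matrix.trace_pow_eq_sum_cycles]
  congr 1
  refine Finset.sum_congr rfl fun x _ => ?_
  rw [cycleEdges_eq_image, Finset.prod_image (injective_sym2_mk_add_one hn).injOn]
  simp [czPhase_apply]

/-- a cycle graph state on an odd number of vertices is orthogonal to
the empty graph state, while on 2m vertices the overlap is |⟨G^∅|C_{2m}⟩|² = 1/2^(2m-2). -/
theorem cycle_overlap_empty (n : ℕ) (hn : 3 ≤ n) :
    (Odd n → ip (gs n (∅ : Finset (Sym2 (Fin n)))) (gs n (cycleEdges n)) = 0) ∧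
    (∀ m : ℕ, n = 2 * m →
      ‖ip (gs n (∅ : Finset (Sym2 (Fin n)))) (gs n (cycleEdges n))‖ ^ 2
        = 1 / 2 ^ (2 * m - 2)) := by
  have : NeZero n := ⟨by omega⟩
  rw [ip_gs_empty_gs_cycleEdges hn]
  constructor
  · rintro ⟨m, rfl⟩
    rw [trace_czPhase_pow_two_mul_add_one, mul_zero]
  · rintro m rfl
    have hm : 2 * m = (m + 1) + (m - 1) := by omega
    have hamp : (2⁻¹ : ℂ) ^ (2 * m) * 2 ^ (m + 1) = 2⁻¹ ^ (m - 1) := by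
      rw [hm, pow_add, mul_right_comm, ← mul_pow, inv_mul_cancel₀ two_ne_zero, one_pow, one_mul]
    rw [trace_czPhase_pow_two_mul, hamp, norm_pow, norm_inv, Complex.norm_two, ← pow_mul, inv_pow,
      one_div, mul_comm, Nat.mul_sub_one]
end

section
/- The subspace of (ℂ²)^⊗n spanned by all graph states on n labeled vertices (equivalently all subgraph states of the complete graph K_n) has dimension 2^n − n. -/
open scoped BigOperators

/-! Up to normalisation, the amplitude of the graph state of `E` at `x` is the character
`χ_E(T) = (-1)^|E ∩ T|` evaluated at `T = supportEdges x`, the edge set of the complete graph on the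
support of `x`. The characters `χ_E`, `E ⊆ completeEdges n`, span all functions of `T` (Fourier
inversion on the Boolean cube), so the graph states span exactly the functions of `x` that factor
through `supportEdges`. This map is injective except on the `n + 1` strings of weight at most one,
which it all sends to `∅`, so the span consists of the functions constant on those strings: a
subspace of codimension `n`. -/

open Finset

section SignCharacter

variable {α K : Type*} [DecidableEq α]

def signChar [CommRing K] (E T : Finset α) : K := ∏ e ∈ E, if e ∈ T then -1 else 1

theorem sum_powerset_signChar_mul_signChar [CommRing K] {U T T' : Finset α}
    (hT : T ⊆ U) (hT' : T' ⊆ U) :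
    ∑ E ∈ U.powerset, signChar E T * signChar E T' = if T = T' then (2 : K) ^ #U else 0 := by
  simp only [signChar, ← prod_mul_distrib, ← prod_one_add]
  split_ifs with h
  · subst h
    rw [prod_congr rfl fun e _ => show (1 : K) + _ = 2 by split_ifs <;> norm_num, prod_const]
  · obtain ⟨e, he⟩ : ∃ e, ¬(e ∈ T ↔ e ∈ T') := by
      by_contra! hc
      exact h (ext hc)
    have heU : e ∈ U := by grind
    exact prod_eq_zero heU (by split_ifs <;> simp_all)

theorem span_range_signChar_comp [Field K] [NeZero (2 : K)] {X : Type*} {U : Finset α}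
    {φ : X → Finset α} (hφ : ∀ x, φ x ⊆ U) :
    Submodule.span K (Set.range fun E : {E // E ⊆ U} => fun x => (signChar E.1 (φ x) : K))
      = LinearMap.range (LinearMap.funLeft K K φ) := by
  apply le_antisymm
  · rw [Submodule.span_le]
    rintro _ ⟨E, rfl⟩
    exact ⟨fun T => signChar E.1 T, rfl⟩
  rintro _ ⟨g, rfl⟩
  -- Fourier inversion over the subsets of `U`, using the orthogonality of the `signChar E`
  have hinv : LinearMap.funLeft K K φ g = ∑ E ∈ U.powerset,
      (((2 : K) ^ #U)⁻¹ * ∑ T ∈ U.powerset, g T * signChar E T) • fun x => signChar E (φ x) := by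
    funext x
    have h2 : (2 : K) ^ #U ≠ 0 := pow_ne_zero _ two_ne_zero
    calc g (φ x) = ∑ T ∈ U.powerset, ((2 : K) ^ #U)⁻¹ * g T * (if T = φ x then 2 ^ #U else 0) := by
          simp only [mul_ite, mul_zero]
          rw [sum_ite_eq', if_pos (mem_powerset.mpr (hφ x)), mul_right_comm,
            inv_mul_cancel₀ h2, one_mul]
      _ = ∑ T ∈ U.powerset, ((2 : K) ^ #U)⁻¹ * g T *
            ∑ E ∈ U.powerset, signChar E T * signChar E (φ x) :=
          sum_congr rfl fun T hT => by
            rw [sum_powerset_signChar_mul_signChar (mem_powerset.mp hT) (hφ x)]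
      _ = _ := by
          simp only [Finset.sum_apply, Pi.smul_apply, smul_eq_mul, mul_sum, sum_mul]
          rw [sum_comm]
          simp only [mul_assoc]
  rw [hinv]
  refine Submodule.sum_mem _ fun E hE => Submodule.smul_mem _ _ ?_
  exact Submodule.subset_span ⟨⟨E, mem_powerset.mp hE⟩, rfl⟩

end SignCharacter

section CompleteGraph

variable {n : ℕ}

def supportEdges (x : Fin n → Fin 2) : Finset (Sym2 (Fin n)) :=
  (completeEdges n).filter fun e => ∀ i ∈ e, x i = 1

def coveredVertices (T : Finset (Sym2 (Fin n))) : Fin n → Fin 2 :=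
  fun i => if ∃ e ∈ T, i ∈ e then 1 else 0

def unitDifferences (K : Type*) [Ring K] (n : ℕ) : ((Fin n → Fin 2) → K) →ₗ[K] (Fin n → K) :=
  LinearMap.pi fun i => LinearMap.proj (R := K) (φ := fun _ => K) (Pi.single i 1 : Fin n → Fin 2)
    - LinearMap.proj 0

@[simp]
theorem mk_mem_supportEdges {x : Fin n → Fin 2} {i j : Fin n} :
    s(i, j) ∈ supportEdges x ↔ i ≠ j ∧ x i = 1 ∧ x j = 1 := by
  simp [supportEdges, completeEdges]

theorem gs_eq_smul_signChar {E : Finset (Sym2 (Fin n))} (hE : E ⊆ completeEdges n) :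
    gs n E = (((Real.sqrt 2)⁻¹ : ℝ) ^ n : ℂ) • fun x => signChar E (supportEdges x) := by
  funext x
  refine congrArg _ (prod_congr rfl fun e he => ?_)
  simp [supportEdges, hE he]

theorem supportEdges_eq_empty_iff {x : Fin n → Fin 2} :
    supportEdges x = ∅ ↔ x = 0 ∨ ∃ i, x = Pi.single i 1 := by
  constructor
  · intro hx
    have hle : ∀ i j, x i = 1 → x j = 1 → i = j := fun i j hi hj => by
      by_contra hij
      simpa [hx] using (mk_mem_supportEdges (x := x)).2 ⟨hij, hi, hj⟩
    by_cases h : ∃ i, x i = 1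
    · obtain ⟨i, hi⟩ := h
      refine Or.inr ⟨i, funext fun j => ?_⟩
      rcases eq_or_ne j i with rfl | hji
      · simpa using hi
      · rw [Pi.single_eq_of_ne hji]
        grind
    · push Not at h
      exact Or.inl (funext fun j => by simp only [Pi.zero_apply]; grind)
  · rw [eq_empty_iff_forall_notMem]
    rintro (rfl | ⟨i, rfl⟩) e <;> induction e using Sym2.ind with | _ a b => ?_
    · simp
    · simp [Pi.single_apply]
      grind

theorem coveredVertices_supportEdges {x : Fin n → Fin 2} (hx : supportEdges x ≠ ∅) :
    coveredVertices (supportEdges x) = x := by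
  obtain ⟨e, he⟩ := nonempty_iff_ne_empty.mpr hx
  induction e using Sym2.ind with | _ a b => ?_
  obtain ⟨-, ha, -⟩ := mk_mem_supportEdges.mp he
  funext k
  by_cases hk : x k = 1
  · have hcov : ∃ e ∈ supportEdges x, k ∈ e := by
      rcases eq_or_ne k a with rfl | hka
      · exact ⟨_, he, Sym2.mem_mk_left _ _⟩
      · exact ⟨s(k, a), mk_mem_supportEdges.mpr ⟨hka, hk, ha⟩, Sym2.mem_mk_left _ _⟩
    simp [coveredVertices, hcov, hk]
  · have hcov : ¬∃ e ∈ supportEdges x, k ∈ e := fun ⟨e, he, hke⟩ =>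
      hk ((mem_filter.mp he).2 k hke)
    simp only [coveredVertices, hcov, if_false]
    grind

/-- `supportEdges` is injective except that it sends all strings of Hamming weight at most one
to `∅`. -/
theorem range_funLeft_supportEdges (K : Type*) [Ring K] :
    LinearMap.range (LinearMap.funLeft K K (supportEdges (n := n)))
      = LinearMap.ker (unitDifferences K n) := by
  ext f
  simp only [LinearMap.mem_range, LinearMap.mem_ker]
  constructor
  · rintro ⟨g, rfl⟩
    funext i
    simp [unitDifferences, supportEdges_eq_empty_iff.mpr (Or.inr ⟨i, rfl⟩),
      supportEdges_eq_empty_iff.mpr (Or.inl rfl)]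
  · intro hf
    have hf' (i : Fin n) : f (Pi.single i 1) = f 0 := sub_eq_zero.mp (congrFun hf i)
    refine ⟨f ∘ coveredVertices, funext fun x => ?_⟩
    by_cases hx : supportEdges x = ∅
    · have hcov : coveredVertices (∅ : Finset (Sym2 (Fin n))) = 0 := by
        funext; simp [coveredVertices]
      rcases supportEdges_eq_empty_iff.mp hx with rfl | ⟨i, rfl⟩ <;> simp [hx, hcov, hf']
    · simp [coveredVertices_supportEdges hx]

theorem unitDifferences_surjective (K : Type*) [Ring K] (n : ℕ) :
    Function.Surjective (unitDifferences K n) := by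
  intro g
  refine ⟨fun x => ∑ i, ((x i : ℕ) : K) * g i, funext fun j => ?_⟩
  simp [unitDifferences, Pi.single_apply, apply_ite (fun a : Fin 2 => ((a : ℕ) : K))]

theorem finrank_ker_unitDifferences (K : Type*) [Field K] (n : ℕ) :
    Module.finrank K (LinearMap.ker (unitDifferences K n)) = 2 ^ n - n := by
  have h := LinearMap.finrank_range_add_finrank_ker (unitDifferences K n)
  rw [LinearMap.range_eq_top.mpr (unitDifferences_surjective K n), finrank_top,
    Module.finrank_fintype_fun_eq_card, Module.finrank_fintype_fun_eq_card, Fintype.card_fun,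
    Fintype.card_fin, Fintype.card_fin] at h
  omega

end CompleteGraph

/-- the subspace of the n-qubit state space spanned by all graph states
on n labeled vertices has dimension 2^n - n. -/
theorem dim_span_graph_states (n : ℕ) :
    Module.finrank ℂ
      (Submodule.span ℂ
        (Set.range fun E : {E : Finset (Sym2 (Fin n)) // E ⊆ completeEdges n} => gs n E.1))
      = 2 ^ n - n := by
  have hc : (((Real.sqrt 2)⁻¹ : ℝ) ^ n : ℂ) ≠ 0 := by simp
  have hspan : Submodule.span ℂ
      (Set.range fun E : {E : Finset (Sym2 (Fin n)) // E ⊆ completeEdges n} => gs n E.1)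
      = LinearMap.ker (unitDifferences ℂ n) := by
    simp only [fun E : {E // E ⊆ completeEdges n} => gs_eq_smul_signChar E.2, Set.range_smul,
      Submodule.span_smul_eq_of_isUnit _ _ hc.isUnit]
    exact (span_range_signChar_comp fun x => filter_subset _ _).trans
      (range_funLeft_supportEdges ℂ)
  rw [hspan, finrank_ker_unitDifferences]
end

section
/- For each i ∈ {1,...,n}, the vector |0...0⟩ − |1_i⟩ (where |1_i⟩ has a 1 in position i and 0 elsewhere) is orthogonal to every graph state on n vertices; consequently the span of all graph states has dimension at most 2^n − n. -/
open scoped BigOperators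

/-- The computational basis state `|x⟩`. -/
noncomputable def ket (n : ℕ) (x : Fin n → Fin 2) : (Fin n → Fin 2) → ℂ :=
  fun y => if y = x then 1 else 0

/-!
A controlled-`Z` gate changes the sign of a basis amplitude only when both of its qubits are `1`,
so every graph state has the same amplitude `2^(-n/2)` on `|0…0⟩` and on each `|1_i⟩`. Hence all
graph states lie in the common kernel of the `n` functionals `w ↦ w(1_i) - w(0)`; these are
linearly independent because the points `1_i` and `0` are pairwise distinct, so that kernel has
dimension `2^n - n`.
-/

section EvalDiff

variable {K α ι : Type*} [Field K]

def evalDiff (a : ι → α) (b : α) : (α → K) →ₗ[K] (ι → K) :=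
  LinearMap.pi fun i => LinearMap.proj (R := K) (φ := fun _ => K) (a i) - LinearMap.proj b

@[simp]
lemma evalDiff_apply (a : ι → α) (b : α) (w : α → K) (i : ι) :
    evalDiff a b w i = w (a i) - w b :=
  rfl

lemma evalDiff_surjective {a : ι → α} {b : α} (ha : Function.Injective a)
    (hb : b ∉ Set.range a) : Function.Surjective (evalDiff (K := K) a b) := by
  intro c
  refine ⟨Function.extend a c 0, funext fun i => ?_⟩
  rw [evalDiff_apply, ha.extend_apply, Function.extend_apply' _ _ _ hb, Pi.zero_apply, sub_zero]

lemma finrank_ker_evalDiff [Fintype α] [Fintype ι] {a : ι → α} {b : α} (ha : Function.Injective a)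
    (hb : b ∉ Set.range a) :
    Module.finrank K (LinearMap.ker (evalDiff (K := K) a b)) =
      Fintype.card α - Fintype.card ι := by
  have hrank := LinearMap.finrank_range_add_finrank_ker (evalDiff (K := K) a b)
  rw [LinearMap.range_eq_top.mpr (evalDiff_surjective ha hb), finrank_top,
    Module.finrank_fintype_fun_eq_card, Module.finrank_fintype_fun_eq_card] at hrank
  omega

end EvalDiff

lemma ip_sub_left {n : ℕ} (u v w : (Fin n → Fin 2) → ℂ) :
    ip (u - v) w = ip u w - ip v w := by
  simp only [ip, Pi.sub_apply, map_sub, sub_mul, Finset.sum_sub_distrib]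

lemma ip_ket {n : ℕ} (a : Fin n → Fin 2) (w : (Fin n → Fin 2) → ℂ) :
    ip (ket n a) w = w a := by
  simp [ip, ket]

lemma gs_apply_of_subsingleton {n : ℕ} {E : Finset (Sym2 (Fin n))}
    (hE : E ⊆ completeEdges n) {x : Fin n → Fin 2} (hx : {j | x j = 1}.Subsingleton) :
    gs n E x = ((Real.sqrt 2)⁻¹ : ℝ) ^ n := by
  rw [gs, Finset.prod_eq_one, mul_one]
  intro e he
  have hloop : ¬ e.IsDiag := (Finset.mem_filter.mp (hE he)).2
  induction e using Sym2.ind with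
  | _ j k =>
    refine if_neg fun h => hloop ?_
    exact Sym2.mk_isDiag_iff.mpr (hx (h j (Sym2.mem_mk_left j k)) (h k (Sym2.mem_mk_right j k)))

lemma gs_single_eq_gs_zero {n : ℕ} {E : Finset (Sym2 (Fin n))} (hE : E ⊆ completeEdges n)
    (i : Fin n) : gs n E (Pi.single i 1) = gs n E 0 := by
  rw [gs_apply_of_subsingleton hE, gs_apply_of_subsingleton hE]
  · simp
  · refine (Set.subsingleton_singleton (a := i)).anti fun j hj => ?_
    by_contra hne
    simp [Pi.single_apply, Set.mem_singleton_iff.not.mp hne] at hj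

section PiSingle

variable {ι M : Type*} [DecidableEq ι] [Zero M] {m : M}

lemma pi_single_left_injective (hm : m ≠ 0) :
    Function.Injective fun i : ι => (Pi.single i m : ι → M) := by
  intro i j hij
  by_contra hne
  simpa [Pi.single_apply, hne, hm] using congrFun hij i

lemma zero_notMem_range_pi_single (hm : m ≠ 0) :
    (0 : ι → M) ∉ Set.range fun i : ι => (Pi.single i m : ι → M) := by
  rintro ⟨i, hi⟩
  simpa [hm] using congrFun hi i

end PiSingle

lemma span_gs_le_ker_evalDiff (n : ℕ) :
    Submodule.span ℂ
        (Set.range fun E : {E : Finset (Sym2 (Fin n)) // E ⊆ completeEdges n} => gs n E.1) ≤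
      LinearMap.ker (evalDiff (fun i : Fin n => (Pi.single i 1 : Fin n → Fin 2)) 0) := by
  rw [Submodule.span_le]
  rintro _ ⟨⟨E, hE⟩, rfl⟩
  ext i
  simp [gs_single_eq_gs_zero hE i]

/-- each vector |0...0⟩ - |1_i⟩ is orthogonal to every graph state on n
vertices, and consequently the span of all graph states has dimension at most 2^n - n. -/
theorem ortho_vectors_and_dim_bound (n : ℕ) :
    (∀ i : Fin n, ∀ E : Finset (Sym2 (Fin n)), E ⊆ completeEdges n →
      ip (ket n (fun _ => 0) - ket n (fun j => if j = i then 1 else 0)) (gs n E) = 0) ∧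
    Module.finrank ℂ
      (Submodule.span ℂ
        (Set.range fun E : {E : Finset (Sym2 (Fin n)) // E ⊆ completeEdges n} => gs n E.1))
      ≤ 2 ^ n - n := by
  constructor
  · intro i E hE
    have hsingle : (fun j => if j = i then (1 : Fin 2) else 0) = Pi.single i 1 := by
      ext j
      rw [Pi.single_apply]
    rw [hsingle, ip_sub_left, ip_ket, ip_ket, gs_single_eq_gs_zero hE, Pi.zero_def, sub_self]
  · calc _ ≤ Module.finrank ℂ (LinearMap.ker
            (evalDiff (K := ℂ) (fun i : Fin n => (Pi.single i 1 : Fin n → Fin 2)) 0)) :=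
          Submodule.finrank_mono (span_gs_le_ker_evalDiff n)
      _ = 2 ^ n - n := by
          rw [finrank_ker_evalDiff (pi_single_left_injective one_ne_zero)
            (zero_notMem_range_pi_single one_ne_zero)]
          simp
end

section
/- For 0 < p < 1, the randomized complete graph state ρ^p_{K_n} = Σ_{F spans K_n} p^{|E_F|}(1-p)^{|E_{K_n}|-|E_F|} |F⟩⟨F| has rank exactly 2^n − n, which is the maximal rank among all n-qubit randomized graph states. -/
open scoped BigOperators

/-!
A positive mixture `∑ c_F |v_F⟩⟨v_F|` equals `C Cᴴ` for the matrix `C` with columns `√c_F v_F`,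
so its rank is the dimension of the span of the `v_F`. Writing the sign of an edge `ij` as
`1 - 2 x_i x_j` in terms of the monomials `x^S = ∏_{i ∈ S} x_i`, the graph state of `F` expands
into the monomials `x^{V(A)}` for `A ⊆ F`, and inclusion–exclusion inverts this. Hence the graph
states of all subgraphs of `K_n` span exactly the monomials `x^S` with `S = V(A)` for a set `A` of
edges, i.e. with `|S| ≠ 1`. The monomials are linearly independent, so this span has dimension `2^n - n`.
-/

open Finset Module

open scoped ComplexOrder in
theorem finrank_range_sum_rankOne_eq_finrank_span {X ι : Type*} [Fintype X]
    (s : Finset ι) (v : ι → X → ℂ) (c : ι → ℝ) (hc : ∀ i ∈ s, 0 < c i)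
    (T : (X → ℂ) →ₗ[ℂ] (X → ℂ))
    (hT : ∀ w, T w = ∑ i ∈ s, ((c i : ℂ) * ∑ x, (starRingEnd ℂ) (v i x) * w x) • v i) :
    finrank ℂ (LinearMap.range T) = finrank ℂ (Submodule.span ℂ (v '' s)) := by
  let C : Matrix X s ℂ := Matrix.of fun x i => (Real.sqrt (c i) : ℂ) * v i x
  have hsq : ∀ i ∈ s, (Real.sqrt (c i) : ℂ) * (Real.sqrt (c i) : ℂ) = c i := fun i hi => by
    rw [← Complex.ofReal_mul, Real.mul_self_sqrt (hc i hi).le]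
  have hTC : T = (C * C.conjTranspose).mulVecLin := by
    refine LinearMap.ext fun w => funext fun x => ?_
    simp only [hT, Matrix.mulVecLin_apply, Matrix.mulVec, dotProduct, Matrix.mul_apply,
      Matrix.conjTranspose_apply, C, Matrix.of_apply, star_mul', Complex.star_def,
      Complex.conj_ofReal, Finset.sum_apply, Pi.smul_apply, smul_eq_mul, Finset.sum_mul,
      Finset.mul_sum]
    rw [Finset.sum_comm]
    refine Finset.sum_congr rfl fun y _ => ?_
    rw [← Finset.sum_coe_sort s]
    refine Finset.sum_congr rfl fun i _ => ?_
    rw [← hsq i i.2]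
    ring
  have hcols : Submodule.span ℂ (Set.range C.col) = Submodule.span ℂ (v '' s) := by
    apply le_antisymm <;> rw [Submodule.span_le]
    · rintro _ ⟨i, rfl⟩
      exact Submodule.smul_mem _ (Real.sqrt (c i) : ℂ) (Submodule.subset_span ⟨i, i.2, rfl⟩)
    · rintro _ ⟨i, hi, rfl⟩
      have hne : (Real.sqrt (c i) : ℂ) ≠ 0 := by
        exact_mod_cast (Real.sqrt_pos.mpr (hc i hi)).ne'
      rw [SetLike.mem_coe, ← inv_smul_smul₀ hne (v i)]
      exact Submodule.smul_mem _ _ (Submodule.subset_span ⟨⟨i, hi⟩, rfl⟩)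
  rw [hTC, ← Matrix.rank, Matrix.rank_self_mul_conjTranspose, Matrix.rank_eq_finrank_span_cols,
    hcols]

namespace GraphState

variable {V : Type*}

def monomial (S : Finset V) : (V → Fin 2) → ℂ :=
  fun x => if ∀ i ∈ S, x i = 1 then 1 else 0

theorem prod_monomial {κ : Type*} [DecidableEq V] (A : Finset κ) (U : κ → Finset V) :
    ∏ j ∈ A, monomial (U j) = monomial (A.biUnion U) := by
  funext x
  simp only [Finset.prod_apply, monomial, Finset.prod_boole]
  congr 1
  refine propext ⟨fun h i hi => ?_, fun h j hj i hi => h i (mem_biUnion.mpr ⟨j, hj, hi⟩)⟩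
  obtain ⟨j, hj, hij⟩ := mem_biUnion.mp hi
  exact h j hj i hij

theorem monomial_apply_indicator [DecidableEq V] (S T : Finset V) :
    monomial S (fun i => if i ∈ T then 1 else 0) = if S ⊆ T then 1 else 0 := by
  simp only [monomial]
  congr 1
  exact propext ⟨fun h i hi => by simpa using h i hi, fun h i hi => by simp [h hi]⟩

section Fintype

variable [Fintype V]

theorem linearIndependent_monomial [DecidableEq V] :
    LinearIndependent ℂ (monomial : Finset V → _) := by
  rw [Fintype.linearIndependent_iff]
  intro g hg
  have hsum : ∀ T : Finset V, ∑ S ∈ T.powerset, g S = 0 := fun T => by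
    have := congrFun hg (fun i => if i ∈ T then 1 else 0)
    simpa [monomial_apply_indicator, Finset.sum_ite, Finset.filter_subset_univ] using this
  intro S
  induction S using Finset.strongInduction with
  | _ S ih =>
    rw [← Finset.sum_eq_single_of_mem S (mem_powerset_self S)
      (fun T hT hTS => ih T ((mem_powerset.mp hT).lt_of_ne hTS)), hsum]

theorem card_filter_card_ne_one :
    #{S : Finset V | #S ≠ 1} = 2 ^ Fintype.card V - Fintype.card V := by
  classical
  have hone : #{S : Finset V | #S = 1} = Fintype.card V := by
    rw [← card_univ (α := V), ← card_image_of_injective univ singleton_injective]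
    congr 1
    ext S
    simp [card_eq_one, eq_comm]
  have := card_filter_add_card_filter_not (s := (univ : Finset (Finset V))) (#· = 1)
  rw [hone, card_univ, Fintype.card_finset] at this
  simp only [ne_eq] at this ⊢
  omega

theorem finrank_span_monomial_card_ne_one :
    finrank ℂ (Submodule.span ℂ (monomial '' {S : Finset V | #S ≠ 1})) =
      2 ^ Fintype.card V - Fintype.card V := by
  classical
  rw [Set.image_eq_range,
    finrank_span_eq_card (b := fun S : ({S : Finset V | #S ≠ 1} : Set (Finset V)) => monomial S.1)
      (linearIndependent_monomial.comp _ Subtype.val_injective),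
    ← Set.toFinset_card, Set.toFinset_ofPred, card_filter_card_ne_one]

end Fintype

variable [DecidableEq V]

/-- `x ↦ (-1) ^ (number of edges of F inside the support of x)`: the graph state of `F` without
its normalisation `2^(-n/2)`. -/
def edgeParity (F : Finset (Sym2 V)) : (V → Fin 2) → ℂ :=
  ∏ e ∈ F, (1 + (-2 : ℂ) • monomial e.toFinset)

theorem prod_one_add_smul_monomial (c : ℂ) (A : Finset (Sym2 V)) :
    ∏ e ∈ A, (1 + c • monomial e.toFinset) =
      ∑ B ∈ A.powerset, c ^ #B • monomial (B.biUnion Sym2.toFinset) := by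
  rw [prod_one_add]
  refine sum_congr rfl fun B _ => ?_
  rw [← smul_prod, prod_monomial]

theorem sum_neg_one_pow_smul_edgeParity (A : Finset (Sym2 V)) :
    ∑ B ∈ A.powerset, (-1 : ℂ) ^ #B • edgeParity B =
      (2 : ℂ) ^ #A • monomial (A.biUnion Sym2.toFinset) := by
  have h : ∀ e : Sym2 V, 1 + (-1 : ℂ) • (1 + (-2 : ℂ) • monomial e.toFinset) =
      (2 : ℂ) • monomial e.toFinset := fun e => by module
  simp_rw [edgeParity, smul_prod, ← prod_one_add, h, ← smul_prod, prod_monomial]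

theorem span_edgeParity_eq_span_monomial (K : Finset (Sym2 V)) :
    Submodule.span ℂ (edgeParity '' K.powerset) =
      Submodule.span ℂ
        ((fun A : Finset (Sym2 V) => monomial (A.biUnion Sym2.toFinset)) '' K.powerset) := by
  apply le_antisymm <;> rw [Submodule.span_le]
  · rintro _ ⟨F, hF, rfl⟩
    rw [edgeParity, prod_one_add_smul_monomial]
    exact Submodule.sum_mem _ fun A hA => Submodule.smul_mem _ _ (Submodule.subset_span
      ⟨A, mem_powerset.mpr ((mem_powerset.mp hA).trans (mem_powerset.mp hF)), rfl⟩)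
  · rintro _ ⟨A, hA, rfl⟩
    dsimp only
    rw [SetLike.mem_coe, ← inv_smul_smul₀ (pow_ne_zero #A (two_ne_zero : (2 : ℂ) ≠ 0))
      (monomial (A.biUnion Sym2.toFinset)), ← sum_neg_one_pow_smul_edgeParity]
    exact Submodule.smul_mem _ _ (Submodule.sum_mem _ fun B hB => Submodule.smul_mem _ _
      (Submodule.subset_span
        ⟨B, mem_powerset.mpr ((mem_powerset.mp hB).trans (mem_powerset.mp hA)), rfl⟩))

/-- A star centred at a vertex of `S` covers `S` as soon as `|S| ≥ 2`. -/
theorem image_biUnion_toFinset_setOf_not_isDiag :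
    (fun A : Finset (Sym2 V) => A.biUnion Sym2.toFinset) '' {A | ∀ e ∈ A, ¬ e.IsDiag} =
      {S | #S ≠ 1} := by
  ext S
  simp only [Set.mem_image, Set.mem_ofPred_eq]
  constructor
  · rintro ⟨A, hA, rfl⟩
    rcases A.eq_empty_or_nonempty with rfl | ⟨e, he⟩
    · simp
    · have := (Sym2.card_toFinset_of_not_isDiag e (hA e he)).symm.le.trans
        (card_le_card (subset_biUnion_of_mem _ he))
      omega
  · intro hS
    rcases S.eq_empty_or_nonempty with rfl | ⟨i, hi⟩
    · exact ⟨∅, by simp, by simp⟩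
    obtain ⟨j, hj⟩ : (S.erase i).Nonempty := by
      rw [← card_pos, card_erase_of_mem hi]
      have := card_pos.mpr ⟨i, hi⟩
      omega
    refine ⟨(S.erase i).image (s(i, ·)), ?_, ?_⟩
    · rintro _ hij
      obtain ⟨k, hk, rfl⟩ := mem_image.mp hij
      exact fun h => (ne_of_mem_erase hk) (Sym2.mk_isDiag_iff.mp h).symm
    · ext k
      simp only [image_biUnion, Sym2.toFinset_mk_eq, mem_biUnion, mem_insert, mem_singleton]
      refine ⟨?_, fun hk => ?_⟩
      · rintro ⟨l, hl, rfl | rfl⟩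
        exacts [hi, mem_of_mem_erase hl]
      · by_cases hki : k = i
        exacts [⟨j, hj, .inl hki⟩, ⟨k, mem_erase.mpr ⟨hki, hk⟩, .inr rfl⟩]

theorem gs_eq_smul_edgeParity (n : ℕ) (F : Finset (Sym2 (Fin n))) :
    gs n F = (((Real.sqrt 2)⁻¹ : ℝ) : ℂ) ^ n • edgeParity F := by
  funext x
  simp only [gs, edgeParity, Pi.smul_apply, Finset.prod_apply, Pi.add_apply, Pi.one_apply,
    monomial, Sym2.mem_toFinset, smul_eq_mul]
  congr 1
  exact prod_congr rfl fun e _ => by split_ifs <;> norm_num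

open scoped Pointwise in
theorem span_gs_powerset_completeEdges (n : ℕ) :
    Submodule.span ℂ (gs n '' (completeEdges n).powerset) =
      Submodule.span ℂ (monomial '' {S : Finset (Fin n) | #S ≠ 1}) := by
  have hP : ((completeEdges n).powerset : Set (Finset (Sym2 (Fin n)))) =
      {A | ∀ e ∈ A, ¬ e.IsDiag} := by
    ext A
    simp [completeEdges, Set.subset_def]
  have hgs : gs n '' (completeEdges n).powerset =
      (((Real.sqrt 2)⁻¹ : ℝ) : ℂ) ^ n • (edgeParity '' (completeEdges n).powerset) := by
    rw [← Set.image_smul, Set.image_image]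
    exact Set.image_congr fun F _ => gs_eq_smul_edgeParity n F
  have hunit : IsUnit ((((Real.sqrt 2)⁻¹ : ℝ) : ℂ) ^ n) :=
    (Ne.isUnit (by exact_mod_cast inv_ne_zero (Real.sqrt_pos.mpr two_pos).ne')).pow n
  rw [hgs, Submodule.span_smul_eq_of_isUnit _ _ hunit, span_edgeParity_eq_span_monomial,
    ← Set.image_image monomial, hP, image_biUnion_toFinset_setOf_not_isDiag]

theorem finrank_span_gs_powerset_completeEdges (n : ℕ) :
    finrank ℂ (Submodule.span ℂ (gs n '' (completeEdges n).powerset)) = 2 ^ n - n := by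
  rw [span_gs_powerset_completeEdges, finrank_span_monomial_card_ne_one, Fintype.card_fin]

end GraphState

/-- for 0 < p < 1, the randomized complete graph state has rank
2^n - n, and this is maximal among all n-qubit randomized graph states. -/
theorem rank_randomized_complete_graph_state (n : ℕ) (p : ℝ) (hp0 : 0 < p) (hp1 : p < 1)
    (ρK : ((Fin n → Fin 2) → ℂ) →ₗ[ℂ] ((Fin n → Fin 2) → ℂ))
    (hρK : ∀ w, ρK w = ∑ F ∈ (completeEdges n).powerset,
      (((p ^ F.card * (1 - p) ^ ((completeEdges n).card - F.card) : ℝ) : ℂ) *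
        ∑ x, (starRingEnd ℂ) (gs n F x) * w x) • gs n F) :
    Module.finrank ℂ (LinearMap.range ρK) = 2 ^ n - n ∧
    ∀ (E : Finset (Sym2 (Fin n))), E ⊆ completeEdges n →
      ∀ (ρG : ((Fin n → Fin 2) → ℂ) →ₗ[ℂ] ((Fin n → Fin 2) → ℂ)),
        (∀ w, ρG w = ∑ F ∈ E.powerset,
          (((p ^ F.card * (1 - p) ^ (E.card - F.card) : ℝ) : ℂ) *
            ∑ x, (starRingEnd ℂ) (gs n F x) * w x) • gs n F) →
        Module.finrank ℂ (LinearMap.range ρG) ≤ 2 ^ n - n := by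
  have hweight : ∀ E : Finset (Sym2 (Fin n)), ∀ F ∈ E.powerset,
      0 < p ^ F.card * (1 - p) ^ (E.card - F.card) :=
    fun _ _ _ => mul_pos (pow_pos hp0 _) (pow_pos (sub_pos.mpr hp1) _)
  have hdim := GraphState.finrank_span_gs_powerset_completeEdges n
  refine ⟨?_, fun E hE ρG hρG => ?_⟩
  · rw [finrank_range_sum_rankOne_eq_finrank_span _ _ _ (hweight _) ρK hρK, hdim]
  · rw [finrank_range_sum_rankOne_eq_finrank_span _ _ _ (hweight E) ρG hρG, ← hdim]
    exact Submodule.finrank_mono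
      (Submodule.span_mono (Set.image_mono (coe_subset.mpr (powerset_mono.mpr hE))))
end

section
/- If G is a graph on n vertices missing m edges relative to the complete graph K_n (i.e., |E_G| = C(n,2) − m), then rank(ρ^p_G) ≤ 2^n − n − m for all p. In particular, for m ≥ 1 and 0 < p < 1, ρ^p_G is never unitarily (hence never locally unitarily) equivalent to ρ^p_{K_n}. -/
open scoped BigOperators

/-!
Every spanning subgraph state `|F⟩` of `G` takes the same value `2^(-n/2)` at the all-zero string
and at every string whose support is a single vertex or a non-edge of `G`. Hence the range of
`ρ^p_G` lies in the common kernel of `n + m` independent functionals `f ↦ f x - f 0`.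

For `0 < p < 1` all weights of `ρ^p_{K_n}` are positive, so its kernel is the orthogonal
complement of the span of all `|F⟩`, `F ⊆ E(K_n)`. Expanding `∏_{e ∈ F} (1 - 2 [e ⊆ supp x])` and
inverting this unitriangular relation over subsets of edges shows that the span contains the
indicator of `{x | S ⊆ supp x}` for every `S` with `|S| ≠ 1`: these are `2^n - n` independent
vectors. So the rank of `ρ^p_{K_n}` exceeds that of `ρ^p_G` once `m ≥ 1`, while unitary
conjugation preserves rank.
-/

open Module Finset

section LinearAlgebra

variable {K X ι : Type*} [Field K]

def evalSubEval (y : ι → X) (x₀ : X) : (X → K) →ₗ[K] (ι → K) :=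
  LinearMap.pi fun i =>
    LinearMap.proj (R := K) (φ := fun _ : X => K) (y i) - LinearMap.proj x₀

theorem evalSubEval_surjective {y : ι → X} (hy : y.Injective) {x₀ : X} (hx₀ : ∀ i, y i ≠ x₀) :
    Function.Surjective (evalSubEval (K := K) y x₀) := by
  intro g
  refine ⟨Function.extend y g 0, funext fun i => ?_⟩
  have hx₀' : ¬ ∃ i, y i = x₀ := fun ⟨i, hi⟩ => hx₀ i hi
  simp [evalSubEval, hy.extend_apply, Function.extend_apply' _ _ _ hx₀']

theorem finrank_ker_evalSubEval [Fintype X] [Fintype ι] {y : ι → X} (hy : y.Injective) {x₀ : X}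
    (hx₀ : ∀ i, y i ≠ x₀) :
    finrank K (LinearMap.ker (evalSubEval (K := K) y x₀)) = Fintype.card X - Fintype.card ι := by
  have h := LinearMap.finrank_range_add_finrank_ker (evalSubEval (K := K) y x₀)
  rw [LinearMap.range_eq_top.2 (evalSubEval_surjective hy hx₀), finrank_top] at h
  simp only [finrank_fintype_fun_eq_card] at h
  omega

theorem linearIndependent_of_triangular [PartialOrder ι] {f : ι → X → K} (y : ι → X)
    (hdiag : ∀ i, f i (y i) ≠ 0) (htri : ∀ i j, f i (y j) ≠ 0 → i ≤ j) :
    LinearIndependent K f := by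
  classical
  rw [linearIndependent_iff']
  intro s c hsum i hi
  by_contra hci
  obtain ⟨j, hj⟩ := (s.filter (c · ≠ 0)).exists_minimal ⟨i, mem_filter.2 ⟨hi, hci⟩⟩
  obtain ⟨hjs, hcj⟩ := mem_filter.1 hj.prop
  have hsum_j : ∑ k ∈ s, c k * f k (y j) = c j * f j (y j) := by
    refine sum_eq_single_of_mem j hjs fun k hks hkj => ?_
    by_contra hk
    have hk_le : k ≤ j := htri k j (right_ne_zero_of_mul hk)
    exact hkj (le_antisymm hk_le (hj.2 (mem_filter.2 ⟨hks, left_ne_zero_of_mul hk⟩) hk_le))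
  have := congr_fun hsum (y j)
  simp only [Finset.sum_apply, Pi.smul_apply, smul_eq_mul, Pi.zero_apply, hsum_j] at this
  exact mul_ne_zero hcj (hdiag j) this

theorem range_le_span_image_of_eq_sum_smul {V M : Type*} [AddCommGroup V] [Module K V]
    [AddCommGroup M] [Module K M] (T : V →ₗ[K] M) {s : Finset ι} {v : ι → M} {c : V → ι → K}
    (hT : ∀ w, T w = ∑ i ∈ s, c w i • v i) :
    LinearMap.range T ≤ Submodule.span K (v '' s) := by
  rintro _ ⟨w, rfl⟩
  rw [hT]
  exact Submodule.sum_mem _ fun i hi => Submodule.smul_mem _ _ (Submodule.subset_span ⟨i, hi, rfl⟩)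

theorem LinearEquiv.finrank_range_conj {V : Type*} [AddCommGroup V] [Module K V] (U : V ≃ₗ[K] V)
    (T : V →ₗ[K] V) : finrank K (LinearMap.range (U.conj T)) = finrank K (LinearMap.range T) := by
  rw [LinearEquiv.conj_apply, LinearMap.range_comp_of_range_eq_top _ U.symm.range,
    LinearMap.range_comp, LinearEquiv.finrank_map_eq]

end LinearAlgebra

section PositiveCombination

open Matrix ComplexOrder

variable {X ι : Type*} [Fintype X]

theorem dotProduct_eq_zero_of_sum_pos_smul_eq_zero {s : Finset ι} {r : ι → ℝ}
    (hr : ∀ i ∈ s, 0 < r i) (v : ι → X → ℂ) {w : X → ℂ}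
    (hw : ∑ i ∈ s, ((r i : ℂ) * (star (v i) ⬝ᵥ w)) • v i = 0) :
    ∀ i ∈ s, star (v i) ⬝ᵥ w = 0 := by
  have hsum : ∑ i ∈ s, (r i : ℂ) * (star (star (v i) ⬝ᵥ w) * (star (v i) ⬝ᵥ w)) = 0 := by
    rw [← dotProduct_zero (star w), ← hw, dotProduct_sum]
    refine sum_congr rfl fun i _ => ?_
    rw [dotProduct_smul, smul_eq_mul, star_dotProduct, star_star]
    ring
  have hnonneg : ∀ i ∈ s, 0 ≤ (r i : ℂ) * (star (star (v i) ⬝ᵥ w) * (star (v i) ⬝ᵥ w)) :=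
    fun i hi => mul_nonneg (Complex.zero_le_real.2 (hr i hi).le) (star_mul_self_nonneg _)
  intro i hi
  have := (sum_eq_zero_iff_of_nonneg hnonneg).1 hsum i hi
  rw [mul_eq_zero, Complex.ofReal_eq_zero] at this
  exact (CStarRing.star_mul_self_eq_zero_iff _).1 (this.resolve_left (hr i hi).ne')

theorem finrank_span_le_finrank_range_of_sum_pos_smul {s : Finset ι} {r : ι → ℝ}
    (hr : ∀ i ∈ s, 0 < r i) (v : ι → X → ℂ) (T : (X → ℂ) →ₗ[ℂ] (X → ℂ))
    (hT : ∀ w, T w = ∑ i ∈ s, ((r i : ℂ) * (star (v i) ⬝ᵥ w)) • v i) :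
    finrank ℂ (Submodule.span ℂ (v '' s)) ≤ finrank ℂ (LinearMap.range T) := by
  let M : Matrix s X ℂ := fun i => star (v i)
  have hker : LinearMap.ker T ≤ LinearMap.ker M.mulVecLin := fun w hw => by
    rw [LinearMap.mem_ker, hT] at hw
    exact funext fun i => dotProduct_eq_zero_of_sum_pos_smul_eq_zero hr v hw i i.2
  have hspan : Submodule.span ℂ (v '' s) = Submodule.span ℂ (Set.range Mᴴ.col) := by
    rw [Set.image_eq_range]
    congr
    ext i x
    exact (star_star (v i x)).symm
  have hM := LinearMap.finrank_range_add_finrank_ker M.mulVecLin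
  have hTrank := LinearMap.finrank_range_add_finrank_ker T
  have hkerrank := Submodule.finrank_mono hker
  rw [hspan, ← rank_eq_finrank_span_cols, rank_conjTranspose]
  change finrank ℂ (LinearMap.range M.mulVecLin) ≤ _
  omega

end PositiveCombination

theorem Sym2.eq_of_forall_mem_imp_mem {α : Type*} {e f : Sym2 α} (hf : ¬ f.IsDiag)
    (h : ∀ i ∈ f, i ∈ e) : f = e := by
  induction f with
  | _ a b =>
    have hab : a ≠ b := fun hab => hf (Sym2.mk_isDiag_iff.2 hab)
    exact ((Sym2.mem_and_mem_iff hab).1 ⟨h a (Sym2.mem_mk_left a b), h b (Sym2.mem_mk_right a b)⟩).symm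

theorem Sym2.toFinset_injective {α : Type*} [DecidableEq α] :
    Function.Injective (Sym2.toFinset : Sym2 α → Finset α) := fun e f h =>
  Sym2.ext fun a => by rw [← Sym2.mem_toFinset, h, Sym2.mem_toFinset]

section GraphStates

variable {n : ℕ}

def onesOn (T : Finset (Fin n)) : Fin n → Fin 2 := fun i => if i ∈ T then 1 else 0

theorem onesOn_apply_eq_one {T : Finset (Fin n)} {i : Fin n} : onesOn T i = 1 ↔ i ∈ T := by
  unfold onesOn
  split_ifs with h <;> simp [h]

theorem onesOn_injective : Function.Injective (onesOn (n := n)) := fun T T' h =>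
  Finset.ext fun i => by rw [← onesOn_apply_eq_one, h, onesOn_apply_eq_one]

theorem gs_apply_of_forall_not {F : Finset (Sym2 (Fin n))} {x : Fin n → Fin 2}
    (hx : ∀ e ∈ F, ¬ ∀ i ∈ e, x i = 1) : gs n F x = (((Real.sqrt 2)⁻¹ : ℝ) : ℂ) ^ n := by
  rw [gs, prod_congr rfl fun e he => if_neg (hx e he), prod_const_one, mul_one]

theorem gs_apply_zero (F : Finset (Sym2 (Fin n))) :
    gs n F 0 = (((Real.sqrt 2)⁻¹ : ℝ) : ℂ) ^ n :=
  gs_apply_of_forall_not fun e _ h => by simpa using h _ e.out_fst_mem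

theorem gs_apply_onesOn_of_not_mem {E F : Finset (Sym2 (Fin n))} (hE : E ⊆ completeEdges n)
    (hF : F ⊆ E) {e : Sym2 (Fin n)} (he : e ∉ E) :
    gs n F (onesOn e.toFinset) = (((Real.sqrt 2)⁻¹ : ℝ) : ℂ) ^ n := by
  refine gs_apply_of_forall_not fun f hf h => he ?_
  have hfd : ¬ f.IsDiag := (mem_filter.1 (hE (hF hf))).2
  rw [← Sym2.eq_of_forall_mem_imp_mem hfd fun i hi =>
    Sym2.mem_toFinset.1 (onesOn_apply_eq_one.1 (h i hi))]
  exact hF hf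

theorem card_sym2_eq_add_card_completeEdges :
    Fintype.card (Sym2 (Fin n)) = n + (completeEdges n).card := by
  classical
  rw [← card_univ, ← card_filter_add_card_filter_not (s := univ) (p := Sym2.IsDiag),
    ← Fintype.card_subtype, Sym2.card_subtype_diag, Fintype.card_fin]
  rfl

theorem finrank_span_gs_le {m : ℕ} {E : Finset (Sym2 (Fin n))} (hE : E ⊆ completeEdges n)
    (hcard : E.card + m = (completeEdges n).card) :
    finrank ℂ (Submodule.span ℂ (gs n '' E.powerset)) ≤ 2 ^ n - n - m := by
  -- `e ∉ E` ranges over the `n` diagonal elements `s(i, i)` and the `m` non-edges of `E`.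
  let y : {e // e ∉ E} → Fin n → Fin 2 := fun e => onesOn e.1.toFinset
  have hy : y.Injective := fun e f h =>
    Subtype.ext (Sym2.toFinset_injective (onesOn_injective h))
  have hy0 : ∀ e, y e ≠ 0 := fun e h => by
    have h1 : y e e.1.out.1 = 1 := onesOn_apply_eq_one.2 (Sym2.mem_toFinset.2 e.1.out_fst_mem)
    simp [h] at h1
  have hle : Submodule.span ℂ (gs n '' E.powerset) ≤ LinearMap.ker (evalSubEval (K := ℂ) y 0) := by
    rw [Submodule.span_le]
    rintro _ ⟨F, hF, rfl⟩
    refine funext fun e => ?_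
    simp [evalSubEval, y, gs_apply_zero,
      gs_apply_onesOn_of_not_mem hE (Finset.mem_powerset.1 hF) e.2]
  have hcardy : Fintype.card {e // e ∉ E} = n + m := by
    rw [Fintype.card_subtype_compl, Fintype.card_coe, card_sym2_eq_add_card_completeEdges]
    omega
  have := Submodule.finrank_mono hle
  rw [finrank_ker_evalSubEval hy hy0, hcardy] at this
  simp only [Fintype.card_fun, Fintype.card_fin] at this
  omega

def onesIndicator (S : Finset (Fin n)) : (Fin n → Fin 2) → ℂ :=
  fun x => if ∀ i ∈ S, x i = 1 then 1 else 0

def edgeOnesIndicator (G : Finset (Sym2 (Fin n))) : (Fin n → Fin 2) → ℂ :=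
  fun x => if ∀ e ∈ G, ∀ i ∈ e, x i = 1 then 1 else 0

theorem gs_eq_sum_powerset (F : Finset (Sym2 (Fin n))) :
    gs n F = (((Real.sqrt 2)⁻¹ : ℝ) : ℂ) ^ n •
      ∑ G ∈ F.powerset, (-2 : ℂ) ^ G.card • edgeOnesIndicator G := by
  funext x
  have hfactor : ∀ e : Sym2 (Fin n), (if ∀ i ∈ e, x i = 1 then (-1 : ℂ) else 1)
      = 1 + (-2) * (if ∀ i ∈ e, x i = 1 then 1 else 0) := fun e => by
    split_ifs <;> norm_num
  simp only [gs, hfactor, prod_one_add, prod_mul_distrib, prod_const, prod_boole,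
    Pi.smul_apply, Finset.sum_apply, smul_eq_mul, edgeOnesIndicator]
  convert rfl

theorem edgeOnesIndicator_mem_span {K G : Finset (Sym2 (Fin n))} (hG : G ⊆ K) :
    edgeOnesIndicator G ∈ Submodule.span ℂ (gs n '' K.powerset) := by
  induction G using Finset.strongInduction with
  | _ G ih =>
    have hgs : gs n G ∈ Submodule.span ℂ (gs n '' K.powerset) :=
      Submodule.subset_span ⟨G, mem_powerset.2 hG, rfl⟩
    have hc : (((Real.sqrt 2)⁻¹ : ℝ) : ℂ) ^ n ≠ 0 := by simp
    rw [gs_eq_sum_powerset, ← add_sum_erase _ _ (mem_powerset_self G)] at hgs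
    have hrest : ∑ G' ∈ G.powerset.erase G, (-2 : ℂ) ^ G'.card • edgeOnesIndicator G'
        ∈ Submodule.span ℂ (gs n '' K.powerset) := by
      refine Submodule.sum_mem _ fun G' hG' => Submodule.smul_mem _ _ (ih G' ?_ ?_)
      · obtain ⟨hne, hsub⟩ := mem_erase.1 hG'
        exact (mem_powerset.1 hsub).ssubset_of_ne hne
      · exact (mem_powerset.1 (mem_erase.1 hG').2).trans hG
    have hG := (Submodule.add_mem_iff_left _ hrest).1 ((Submodule.smul_mem_iff _ hc).1 hgs)
    exact (Submodule.smul_mem_iff _ (by norm_num)).1 hG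

theorem edgeOnesIndicator_edgesWithin {S : Finset (Fin n)} (hS : S.card ≠ 1) :
    edgeOnesIndicator ((completeEdges n).filter fun e => ∀ i ∈ e, i ∈ S) = onesIndicator S := by
  funext x
  refine if_congr ⟨fun h i hi => ?_, fun h e he j hj => h j ((mem_filter.1 he).2 j hj)⟩ rfl rfl
  obtain ⟨j, hj, hji⟩ := exists_mem_ne (s := S) (by have := card_pos.2 ⟨i, hi⟩; omega) i
  refine h s(i, j) (mem_filter.2 ⟨mem_filter.2 ⟨mem_univ _, ?_⟩, ?_⟩) i (Sym2.mem_mk_left i j)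
  · exact fun hd => hji (Sym2.mk_isDiag_iff.1 hd).symm
  · simp [hi, hj]

theorem onesIndicator_onesOn (S T : Finset (Fin n)) :
    onesIndicator S (onesOn T) = if S ⊆ T then 1 else 0 :=
  if_congr (forall₂_congr fun _ _ => onesOn_apply_eq_one) rfl rfl

theorem linearIndependent_onesIndicator : LinearIndependent ℂ (onesIndicator (n := n)) :=
  linearIndependent_of_triangular onesOn (fun S => by simp [onesIndicator_onesOn])
    fun S T h => by simpa [onesIndicator_onesOn] using h

theorem card_subtype_card_ne_one :
    Fintype.card {S : Finset (Fin n) // S.card ≠ 1} = 2 ^ n - n := by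
  rw [Fintype.card_subtype_compl, Fintype.card_subtype, ← powerset_univ, ← powersetCard_eq_filter,
    card_powersetCard]
  simp

theorem two_pow_sub_le_finrank_span_gs :
    2 ^ n - n ≤ finrank ℂ (Submodule.span ℂ (gs n '' (completeEdges n).powerset)) := by
  have hli := (linearIndependent_onesIndicator (n := n)).comp
    (Subtype.val : {S : Finset (Fin n) // S.card ≠ 1} → _) Subtype.val_injective
  rw [← card_subtype_card_ne_one, ← finrank_span_eq_card hli]
  refine Submodule.finrank_mono (Submodule.span_le.2 ?_)
  rintro _ ⟨S, rfl⟩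
  rw [Function.comp_apply, ← edgeOnesIndicator_edgesWithin S.2]
  exact edgeOnesIndicator_mem_span (filter_subset _ _)

end GraphStates

/-- if G misses m edges relative to the complete graph K_n, then the
randomized graph state ρ^p_G has rank at most 2^n - n - m; in particular for m ≥ 1 and
0 < p < 1 it is never unitarily (hence never locally unitarily) equivalent to ρ^p_{K_n}. -/
theorem rank_bound_missing_edges (n m : ℕ) (E : Finset (Sym2 (Fin n)))
    (hE : E ⊆ completeEdges n) (hcard : E.card + m = (completeEdges n).card)
    (p : ℝ)
    (ρG : ((Fin n → Fin 2) → ℂ) →ₗ[ℂ] ((Fin n → Fin 2) → ℂ))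
    (hρG : ∀ w, ρG w = ∑ F ∈ E.powerset,
      (((p ^ F.card * (1 - p) ^ (E.card - F.card) : ℝ) : ℂ) *
        ∑ x, (starRingEnd ℂ) (gs n F x) * w x) • gs n F)
    (ρK : ((Fin n → Fin 2) → ℂ) →ₗ[ℂ] ((Fin n → Fin 2) → ℂ))
    (hρK : ∀ w, ρK w = ∑ F ∈ (completeEdges n).powerset,
      (((p ^ F.card * (1 - p) ^ ((completeEdges n).card - F.card) : ℝ) : ℂ) *
        ∑ x, (starRingEnd ℂ) (gs n F x) * w x) • gs n F) :
    Module.finrank ℂ (LinearMap.range ρG) ≤ 2 ^ n - n - m ∧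
    (1 ≤ m → 0 < p → p < 1 →
      ¬ ∃ U : ((Fin n → Fin 2) → ℂ) ≃ₗ[ℂ] ((Fin n → Fin 2) → ℂ),
        (∀ v w, ip (U v) (U w) = ip v w) ∧ ρG = U.conj ρK) := by
  have hG : finrank ℂ (LinearMap.range ρG) ≤ 2 ^ n - n - m :=
    (Submodule.finrank_mono (range_le_span_image_of_eq_sum_smul ρG hρG)).trans
      (finrank_span_gs_le hE hcard)
  refine ⟨hG, fun hm hp hp1 ⟨U, _, hU⟩ => ?_⟩
  have hK : 2 ^ n - n ≤ finrank ℂ (LinearMap.range ρK) :=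
    two_pow_sub_le_finrank_span_gs.trans <| finrank_span_le_finrank_range_of_sum_pos_smul
      (fun F _ => mul_pos (pow_pos hp _) (pow_pos (sub_pos.2 hp1) _)) (gs n) ρK hρK
  rw [hU, LinearEquiv.finrank_range_conj] at hG
  have : n < 2 ^ n := Nat.lt_two_pow_self
  omega
end

section
/- For the star graph S_n (n ≥ 2), the randomization overlap L(ρ^p_{S_n}) = Tr[|S_n⟩⟨S_n| ρ^p_{S_n}] equals 1/4 + (3/4) p^{n-1}. -/
open scoped BigOperators

/-- The edge set of the star graph on `n+2` vertices with center `0`. -/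
def starEdges (n : ℕ) : Finset (Sym2 (Fin (n + 2))) :=
  (Finset.univ.filter fun j : Fin (n + 2) => j ≠ 0).image fun j => s(0, j)

/-! Writing `czSign x e = ±1` for the phase of the controlled-`Z` on `e` at the basis state `x`,
for `F ⊆ E` one gets `⟨E|F⟩ = 2⁻ᴺ ∑ₓ ∏_{e ∈ E \ F} czSign x e`. For the star `S` and a proper
subgraph `F`, every missing edge passes through the centre: the basis states with centre `0`
contribute `1` each, while those with centre `1` cancel in pairs by flipping the leaf of one
missing edge. Hence `⟨S|F⟩ = 1/2`, and averaging `|⟨S|F⟩|²` against the binomial weights gives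
`1/4 + 3/4 · p^(N-1)`. -/

open Finset

section GraphState

variable {m : ℕ}

def czSign (x : Fin m → Fin 2) (e : Sym2 (Fin m)) : ℂ :=
  if ∀ i ∈ e, x i = 1 then -1 else 1

lemma gs_apply (E : Finset (Sym2 (Fin m))) (x : Fin m → Fin 2) :
    gs m E x = ((Real.sqrt 2)⁻¹ : ℝ) ^ m * ∏ e ∈ E, czSign x e :=
  rfl

lemma czSign_mul_self (x : Fin m → Fin 2) (e : Sym2 (Fin m)) : czSign x e * czSign x e = 1 := by
  unfold czSign; split_ifs <;> norm_num

lemma conj_czSign (x : Fin m → Fin 2) (e : Sym2 (Fin m)) :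
    starRingEnd ℂ (czSign x e) = czSign x e := by
  unfold czSign; split_ifs <;> simp

lemma conj_gs (E : Finset (Sym2 (Fin m))) (x : Fin m → Fin 2) :
    starRingEnd ℂ (gs m E x) = gs m E x := by
  simp only [gs_apply, map_mul, map_pow, Complex.conj_ofReal, map_prod, conj_czSign]

lemma ip_gs_of_subset {E F : Finset (Sym2 (Fin m))} (hFE : F ⊆ E) :
    ip (gs m E) (gs m F) = ((2 : ℂ) ^ m)⁻¹ * ∑ x, ∏ e ∈ E \ F, czSign x e := by
  rw [ip, mul_sum]
  refine sum_congr rfl fun x _ => ?_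
  have hnorm : ((((Real.sqrt 2)⁻¹ : ℝ) : ℂ) ^ m) ^ 2 = ((2 : ℂ) ^ m)⁻¹ := by
    rw [← pow_mul, mul_comm, pow_mul, ← Complex.ofReal_pow, inv_pow,
      Real.sq_sqrt zero_le_two]
    push_cast
    rw [inv_pow]
  have hF : (∏ e ∈ F, czSign x e) ^ 2 = 1 := by
    rw [← prod_pow]; exact prod_eq_one fun e _ => (sq _).trans (czSign_mul_self x e)
  rw [conj_gs, gs_apply, gs_apply, ← prod_sdiff hFE]
  linear_combination (∏ e ∈ E \ F, czSign x e) * (∏ e ∈ F, czSign x e) ^ 2 * hnorm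
    + ((2 : ℂ) ^ m)⁻¹ * (∏ e ∈ E \ F, czSign x e) * hF

lemma ip_gs_self (E : Finset (Sym2 (Fin m))) : ip (gs m E) (gs m E) = 1 := by
  rw [ip_gs_of_subset subset_rfl, sdiff_self]
  simp

lemma czSign_update_of_notMem {x : Fin m → Fin 2} {j : Fin m} {e : Sym2 (Fin m)} (hj : j ∉ e)
    (b : Fin 2) : czSign (Function.update x j b) e = czSign x e := by
  refine if_congr (forall₂_congr fun i hi => ?_) rfl rfl
  rw [Function.update_of_ne (ne_of_mem_of_not_mem hi hj)]

lemma czSign_update_flip {x : Fin m → Fin 2} {i j : Fin m} (hij : i ≠ j) (hx : x i = 1) :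
    czSign (Function.update x j (x j + 1)) s(i, j) = -czSign x s(i, j) := by
  simp only [czSign, Sym2.mem_iff, forall_eq_or_imp, forall_eq, Function.update_self,
    Function.update_of_ne hij, hx, true_and]
  rcases Fin.exists_fin_two.mp ⟨x j, rfl⟩ with h | h <;> simp [h]

lemma prod_czSign_update_pendant {S : Finset (Sym2 (Fin m))} {i j : Fin m} (hij : i ≠ j)
    (hmem : s(i, j) ∈ S) (hpend : ∀ e ∈ S, j ∈ e → e = s(i, j)) {x : Fin m → Fin 2}
    (hx : x i = 1) :
    ∏ e ∈ S, czSign (Function.update x j (x j + 1)) e = -∏ e ∈ S, czSign x e := by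
  rw [← mul_prod_erase _ _ hmem, ← mul_prod_erase _ _ hmem, czSign_update_flip hij hx,
    neg_mul]
  congr 2
  refine prod_congr rfl fun e he => czSign_update_of_notMem (fun hje => ?_) _
  exact ne_of_mem_erase he (hpend e (mem_of_mem_erase he) hje)

lemma sum_prod_czSign_eq_zero_of_pendant {S : Finset (Sym2 (Fin m))} {i j : Fin m}
    (hij : i ≠ j) (hmem : s(i, j) ∈ S) (hpend : ∀ e ∈ S, j ∈ e → e = s(i, j)) :
    ∑ x ∈ univ.filter (fun x : Fin m → Fin 2 => x i = 1), ∏ e ∈ S, czSign x e = 0 := by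
  refine sum_involution (fun x _ => Function.update x j (x j + 1)) (fun x hx => ?_)
    (fun x _ _ h => ?_) (fun x hx => ?_) (fun x _ => ?_)
  · rw [prod_czSign_update_pendant hij hmem hpend (mem_filter.mp hx).2, add_neg_cancel]
  · have := congrFun h j
    simp only [Function.update_self, add_eq_left] at this
    exact one_ne_zero this
  · simpa [Function.update_of_ne hij] using hx
  · have h11 : (1 + 1 : Fin 2) = 0 := rfl
    funext k
    rcases eq_or_ne k j with rfl | hk
    · simp [add_assoc, h11]
    · simp [Function.update_of_ne hk]

end GraphState

section Star

variable {n : ℕ}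

lemma mem_starEdges {e : Sym2 (Fin (n + 2))} : e ∈ starEdges n ↔ ∃ j, j ≠ 0 ∧ s(0, j) = e := by
  simp [starEdges]

lemma card_starEdges (n : ℕ) : #(starEdges n) = n + 1 := by
  rw [starEdges, card_image_of_injective _ fun _ _ => Sym2.congr_right.mp, filter_ne',
    card_erase_of_mem (mem_univ _), card_univ, Fintype.card_fin]
  rfl

lemma czSign_starEdges_of_center_eq_zero {x : Fin (n + 2) → Fin 2} (hx : x 0 = 0)
    {e : Sym2 (Fin (n + 2))} (he : e ∈ starEdges n) : czSign x e = 1 := by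
  obtain ⟨j, -, rfl⟩ := mem_starEdges.mp he
  simp [czSign, hx]

lemma sum_prod_czSign_of_subset_starEdges {S : Finset (Sym2 (Fin (n + 2)))}
    (hS : S ⊆ starEdges n) (hne : S.Nonempty) :
    ∑ x, ∏ e ∈ S, czSign x e = 2 ^ (n + 1) := by
  obtain ⟨_, hmem⟩ := hne
  obtain ⟨j, hj, rfl⟩ := mem_starEdges.mp (hS hmem)
  have hpend : ∀ e ∈ S, j ∈ e → e = s(0, j) := by
    intro e he hje
    obtain ⟨k, -, rfl⟩ := mem_starEdges.mp (hS he)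
    rcases Sym2.mem_iff.mp hje with h | rfl
    · exact absurd h hj
    · rfl
  rw [← sum_fiberwise univ (fun x => x 0), Fin.sum_univ_two,
    sum_prod_czSign_eq_zero_of_pendant hj.symm hmem hpend, add_zero,
    sum_congr rfl fun x hx =>
      prod_eq_one fun e he => czSign_starEdges_of_center_eq_zero (mem_filter.mp hx).2 (hS he),
    sum_const, nsmul_one, ← Fintype.piFinset_univ,
    Fintype.card_filter_piFinset_const_eq_of_mem _ _ (mem_univ _)]
  simp

lemma ip_gs_starEdges {F : Finset (Sym2 (Fin (n + 2)))} (hF : F ⊆ starEdges n) :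
    ip (gs (n + 2) (starEdges n)) (gs (n + 2) F) = if F = starEdges n then 1 else 1 / 2 := by
  split_ifs with h
  · rw [h, ip_gs_self]
  · have hne : (starEdges n \ F).Nonempty :=
      sdiff_nonempty.mpr fun hs => h (Subset.antisymm hF hs)
    rw [ip_gs_of_subset hF, sum_prod_czSign_of_subset_starEdges sdiff_subset hne]
    field_simp
    ring

end Star

lemma sum_powerset_binomial_mul_ite {α R : Type*} [DecidableEq α] [CommRing R] (E : Finset α)
    (p a b : R) :
    ∑ F ∈ E.powerset, p ^ #F * (1 - p) ^ (#E - #F) * (if F = E then a else b)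
      = b + (a - b) * p ^ #E := by
  have hsplit : ∀ F, (if F = E then a else b) = b + if F = E then a - b else 0 := by
    intro F; split_ifs <;> ring
  simp only [hsplit, mul_add, sum_add_distrib, ← sum_mul, sum_pow_mul_eq_add_pow,
    add_sub_cancel, one_pow, one_mul, mul_ite, mul_zero, sum_ite_eq',
    mem_powerset_self, if_true, Nat.sub_self, pow_zero, mul_one]
  ring

theorem star_randomization_overlap_general (n : ℕ) (p : ℝ) :
    ∑ F ∈ (starEdges n).powerset,
        p ^ F.card * (1 - p) ^ ((starEdges n).card - F.card) *
          ‖ip (gs (n + 2) (starEdges n)) (gs (n + 2) F)‖ ^ 2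
      = 1 / 4 + 3 / 4 * p ^ (n + 1) := by
  calc _ = ∑ F ∈ (starEdges n).powerset, p ^ #F * (1 - p) ^ (#(starEdges n) - #F) *
          (if F = starEdges n then 1 else 1 / 4 : ℝ) := by
        refine sum_congr rfl fun F hF => ?_
        rw [ip_gs_starEdges (mem_powerset.mp hF)]
        split_ifs <;> norm_num
    _ = 1 / 4 + 3 / 4 * p ^ (n + 1) := by
        rw [sum_powerset_binomial_mul_ite, card_starEdges]
        ring

/-- the randomization overlap of the randomized star graph state on
n+2 vertices is L(ρ^p_{S}) = 1/4 + (3/4) p^(n+1)  (i.e. 1/4 + (3/4) p^(N-1) on N ≥ 2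
vertices). -/
theorem star_randomization_overlap (n : ℕ) (p : ℝ) (hp0 : 0 ≤ p) (hp1 : p ≤ 1) :
    ∑ F ∈ (starEdges n).powerset,
        p ^ F.card * (1 - p) ^ ((starEdges n).card - F.card) *
          ‖ip (gs (n + 2) (starEdges n)) (gs (n + 2) F)‖ ^ 2
      = 1 / 4 + 3 / 4 * p ^ (n + 1) :=
  star_randomization_overlap_general n p
end
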